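/- arXiv:2103.14110 — 5 statements merged into one kernel-verified Lean document; each statement's English description precedes it below -/
import Mathlib

section
/- Let M = ⟨C_M, (G̃^(1),...,G̃^(γ))⟩ be a matrix zonotope in R^{n×k} and let Z = ⟨c_Z, (g^(1),...,g^(δ))⟩ be a zonotope in R^k. Then the set {Xz : X ∈ M, z ∈ Z} is contained in the zonotope with center C_M c_Z and generators consisting of: C_M g^(j) for each j, G̃^(i) c_Z for each i, and G̃^(i) g^(j) for each pair (i,j). -/
open Matrix BigOperators

def zono {V : Type*} [AddCommGroup V] [Module ℝ V] {ι : Type*} [Fintype ι]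
    (c : V) (g : ι → V) : Set V :=
  {x | ∃ β : ι → ℝ, (∀ i, |β i| ≤ 1) ∧ x = c + ∑ i, β i • g i}

section Bilinear

variable {U V W : Type*} [AddCommGroup U] [Module ℝ U] [AddCommGroup V] [Module ℝ V]
  [AddCommGroup W] [Module ℝ W] {ι κ : Type*} [Fintype ι] [Fintype κ]

theorem LinearMap.map_add_sum_smul₂ (B : U →ₗ[ℝ] V →ₗ[ℝ] W) (c : U) (g : ι → U) (β : ι → ℝ)
    (d : V) (h : κ → V) (α : κ → ℝ) :
    B (c + ∑ i, β i • g i) (d + ∑ j, α j • h j) =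
      B c d + ((∑ j, α j • B c (h j)) + ((∑ i, β i • B (g i) d) +
        ∑ p : ι × κ, (β p.1 * α p.2) • B (g p.1) (h p.2))) := by
  simp only [map_add, LinearMap.add_apply, map_sum, LinearMap.sum_apply, map_smul,
    LinearMap.smul_apply, smul_add, Finset.smul_sum, smul_smul, Finset.sum_add_distrib,
    Fintype.sum_prod_type]
  rw [Finset.sum_comm (γ := κ)]
  simp only [mul_comm (α _)]
  abel

/-- The product coefficient `β i * α j` of the mixed generator `B (g i) (h j)` again lies in
`[-1, 1]`, which is why the bilinear image of two zonotopes stays inside a zonotope. -/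
theorem image2_zono_subset (B : U →ₗ[ℝ] V →ₗ[ℝ] W) (c : U) (g : ι → U) (d : V) (h : κ → V) :
    Set.image2 (fun x y => B x y) (zono c g) (zono d h) ⊆
      zono (B c d) (Sum.elim (fun j => B c (h j))
        (Sum.elim (fun i => B (g i) d) (fun p : ι × κ => B (g p.1) (h p.2)))) := by
  rintro _ ⟨_, ⟨β, hβ, rfl⟩, _, ⟨α, hα, rfl⟩, rfl⟩
  refine ⟨Sum.elim α (Sum.elim β fun p => β p.1 * α p.2), ?_, ?_⟩
  · rintro (j | i | p)
    · exact hα j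
    · exact hβ i
    · simpa only [Sum.elim_inr, abs_mul] using mul_le_one₀ (hβ p.1) (abs_nonneg _) (hα p.2)
  · simp only [LinearMap.map_add_sum_smul₂, Fintype.sum_sum_type, Sum.elim_inl, Sum.elim_inr]

end Bilinear

/-- The product of a matrix zonotope and a zonotope is over-approximated by the zonotope
with center `C_M c_Z` and generators `C_M gʲ`, `G̃ⁱ c_Z`, and `G̃ⁱ gʲ`. -/
theorem matrix_zonotope_mul_zonotope_subset {n k γ δ : ℕ}
    (CM : Matrix (Fin n) (Fin k) ℝ) (GM : Fin γ → Matrix (Fin n) (Fin k) ℝ)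
    (cZ : Fin k → ℝ) (gZ : Fin δ → Fin k → ℝ) :
    {y : Fin n → ℝ | ∃ X ∈ zono CM GM, ∃ z ∈ zono cZ gZ, y = X.mulVec z} ⊆
      zono (CM.mulVec cZ)
        (Sum.elim (fun j : Fin δ => CM.mulVec (gZ j))
          (Sum.elim (fun i : Fin γ => (GM i).mulVec cZ)
            (fun p : Fin γ × Fin δ => (GM p.1).mulVec (gZ p.2)))) := by
  rintro _ ⟨X, hX, z, hz, rfl⟩
  exact image2_zono_subset (mulVecBilin ℝ ℝ) CM GM cZ gZ (Set.mem_image2_of_mem hX hz)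
end

section
/- Let Y₊, Y₋ ∈ R^{n×T}, U₋ ∈ R^{m×T} be data matrices, and suppose the true system matrices satisfy Y₊ − V₊ = [A B] [Y₋; U₋] − A V₋ + W₋ for some noise matrices W₋ ∈ M_w, V₋, V₊ ∈ M_v, and A V₋ ∈ M_{Av}, where M_w, M_v, M_{Av} are matrix zonotopes. If the stacked matrix [Y₋; U₋] ∈ R^{(n+m)×T} has a right inverse P (i.e., [Y₋; U₋] P = I), then [A B] belongs to the matrix zonotope M_Σ = (Y₊ ⊕ (−M_w) ⊕ (−M_v) ⊕ M_{Av}) · P, where the product with P is applied elementwise to the center and generators. -/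
open Matrix BigOperators

section Zonotope

variable {V W : Type*} [AddCommGroup V] [Module ℝ V] [AddCommGroup W] [Module ℝ W]
  {ι κ : Type*} [Fintype ι] [Fintype κ]

theorem add_mem_zono {c d x y : V} {g : ι → V} {h : κ → V}
    (hx : x ∈ zono c g) (hy : y ∈ zono d h) : x + y ∈ zono (c + d) (Sum.elim g h) := by
  obtain ⟨β, hβ, rfl⟩ := hx
  obtain ⟨δ, hδ, rfl⟩ := hy
  refine ⟨Sum.elim β δ, fun i => i.rec hβ hδ, ?_⟩
  simp only [Fintype.sum_sum_type, Sum.elim_inl, Sum.elim_inr]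
  exact add_add_add_comm _ _ _ _

theorem map_mem_zono (f : V →ₗ[ℝ] W) {c x : V} {g : ι → V} (hx : x ∈ zono c g) :
    f x ∈ zono (f c) (f ∘ g) := by
  obtain ⟨β, hβ, rfl⟩ := hx
  exact ⟨β, hβ, by simp⟩

theorem neg_mem_zono {c x : V} {g : ι → V} (hx : x ∈ zono c g) :
    -x ∈ zono (-c) (fun i => -g i) :=
  map_mem_zono (-LinearMap.id) hx

theorem add_left_mem_zono (y : V) {c x : V} {g : ι → V} (hx : x ∈ zono c g) :
    y + x ∈ zono (y + c) g := by
  obtain ⟨β, hβ, rfl⟩ := hx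
  exact ⟨β, hβ, (add_assoc y c _).symm⟩

theorem mul_mem_zono {l p q : Type*} [Fintype p] {C X : Matrix l p ℝ} {G : ι → Matrix l p ℝ}
    (hX : X ∈ zono C G) (P : Matrix p q ℝ) : X * P ∈ zono (C * P) (fun i => G i * P) :=
  map_mem_zono (mulRightLinearMap l ℝ P) hX

end Zonotope

theorem system_matrix_in_M_sigma_general {n m T γw γv γa : ℕ}
    (A : Matrix (Fin n) (Fin n) ℝ) (B : Matrix (Fin n) (Fin m) ℝ)
    (Yp Ym : Matrix (Fin n) (Fin T) ℝ) (Um : Matrix (Fin m) (Fin T) ℝ)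
    (Wm Vm Vp : Matrix (Fin n) (Fin T) ℝ)
    (Cw : Matrix (Fin n) (Fin T) ℝ) (Gw : Fin γw → Matrix (Fin n) (Fin T) ℝ)
    (Cv : Matrix (Fin n) (Fin T) ℝ) (Gv : Fin γv → Matrix (Fin n) (Fin T) ℝ)
    (Ca : Matrix (Fin n) (Fin T) ℝ) (Ga : Fin γa → Matrix (Fin n) (Fin T) ℝ)
    (P : Matrix (Fin T) (Fin n ⊕ Fin m) ℝ)
    (hdata : Yp - Vp =
      Matrix.fromCols A B * Matrix.fromRows Ym Um - A * Vm + Wm)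
    (hW : Wm ∈ zono Cw Gw) (hVp : Vp ∈ zono Cv Gv)
    (hAV : A * Vm ∈ zono Ca Ga)
    (hP : Matrix.fromRows Ym Um * P = 1) :
    Matrix.fromCols A B ∈
      zono ((Yp - Cw - Cv + Ca) * P)
        (Sum.elim (fun i => -(Gw i) * P)
          (Sum.elim (fun i => -(Gv i) * P) (fun i => Ga i * P))) := by
  have hprod : Matrix.fromCols A B * Matrix.fromRows Ym Um = Yp + (-Wm + (-Vp + A * Vm)) := by
    rw [eq_add_of_sub_eq hdata]
    abel
  have hAB : Matrix.fromCols A B = (Yp + (-Wm + (-Vp + A * Vm))) * P := by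
    rw [← hprod, Matrix.mul_assoc, hP, Matrix.mul_one]
  have hmem := mul_mem_zono (add_left_mem_zono Yp
    (add_mem_zono (neg_mem_zono hW) (add_mem_zono (neg_mem_zono hVp) hAV))) P
  rw [hAB]
  convert hmem using 2
  · congr 1
    abel
  · ext (i | i | i) : 1 <;> rfl

/-- Any system matrix `[A B]` consistent with the noisy data and the noise bounds belongs
to the matrix zonotope `M_Σ = (Y₊ ⊕ (−M_w) ⊕ (−M_v) ⊕ M_{Av}) · P`, where `P` is a right
inverse of the stacked data matrix `[Y₋; U₋]`. -/
theorem system_matrix_in_M_sigma {n m T γw γv γa : ℕ}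
    (A : Matrix (Fin n) (Fin n) ℝ) (B : Matrix (Fin n) (Fin m) ℝ)
    (Yp Ym : Matrix (Fin n) (Fin T) ℝ) (Um : Matrix (Fin m) (Fin T) ℝ)
    (Wm Vm Vp : Matrix (Fin n) (Fin T) ℝ)
    (Cw : Matrix (Fin n) (Fin T) ℝ) (Gw : Fin γw → Matrix (Fin n) (Fin T) ℝ)
    (Cv : Matrix (Fin n) (Fin T) ℝ) (Gv : Fin γv → Matrix (Fin n) (Fin T) ℝ)
    (Ca : Matrix (Fin n) (Fin T) ℝ) (Ga : Fin γa → Matrix (Fin n) (Fin T) ℝ)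
    (P : Matrix (Fin T) (Fin n ⊕ Fin m) ℝ)
    (hdata : Yp - Vp =
      Matrix.fromCols A B * Matrix.fromRows Ym Um - A * Vm + Wm)
    (hW : Wm ∈ zono Cw Gw) (hVm : Vm ∈ zono Cv Gv) (hVp : Vp ∈ zono Cv Gv)
    (hAV : A * Vm ∈ zono Ca Ga)
    (hP : Matrix.fromRows Ym Um * P = 1) :
    Matrix.fromCols A B ∈
      zono ((Yp - Cw - Cv + Ca) * P)
        (Sum.elim (fun i => -(Gw i) * P)
          (Sum.elim (fun i => -(Gv i) * P) (fun i => Ga i * P))) :=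
  system_matrix_in_M_sigma_general A B Yp Ym Um Wm Vm Vp Cw Gw Cv Gv Ca Ga P hdata hW hVp hAV hP
end

section
/- Consider the linear system x(t+1) = A x(t) + B u(t) + w(t), y(t) = x(t) + v(t), with w(t) ∈ Z_w, v(t) ∈ Z_v, and A v(t) ∈ Z_{Av} for zonotopes Z_w, Z_v, Z_{Av}. Then for any t, y(t+1) ∈ [A B]·({y(t)} × {u(t)}) ⊕ Z_w ⊕ Z_v ⊕ (−Z_{Av}); i.e., the one-step output reachable set from measured output y(t) under input u(t) is contained in the zonotope A·⟨y(t),0⟩ ⊕ B·⟨u(t),0⟩ ⊕ Z_w ⊕ Z_v ⊕ (−Z_{Av}). -/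
open Matrix BigOperators Pointwise

/-- One-step output reachability: `y(t+1)` lies in the Minkowski sum
`{A y(t)} ⊕ {B u(t)} ⊕ Z_w ⊕ Z_v ⊕ (−Z_{Av})`. -/
theorem one_step_output_reachable {n m γw γv γa : ℕ}
    (A : Matrix (Fin n) (Fin n) ℝ) (B : Matrix (Fin n) (Fin m) ℝ)
    (x y : ℕ → Fin n → ℝ) (u : ℕ → Fin m → ℝ) (w v : ℕ → Fin n → ℝ)
    (cw : Fin n → ℝ) (gw : Fin γw → Fin n → ℝ)
    (cv : Fin n → ℝ) (gv : Fin γv → Fin n → ℝ)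
    (ca : Fin n → ℝ) (ga : Fin γa → Fin n → ℝ)
    (hdyn : ∀ t, x (t + 1) = A.mulVec (x t) + B.mulVec (u t) + w t)
    (hout : ∀ t, y t = x t + v t)
    (hw : ∀ t, w t ∈ zono cw gw)
    (hv : ∀ t, v t ∈ zono cv gv)
    (hav : ∀ t, A.mulVec (v t) ∈ zono ca ga)
    (t : ℕ) :
    y (t + 1) ∈
      ({A.mulVec (y t)} : Set (Fin n → ℝ)) + ({B.mulVec (u t)} : Set (Fin n → ℝ)) +
        zono cw gw + zono cv gv + -(zono ca ga) := by
  have key : y (t + 1) = A.mulVec (y t) + B.mulVec (u t) + w t + v (t + 1) + -(A.mulVec (v t)) := by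
    rw [hout, hout, hdyn, Matrix.mulVec_add]
    abel
  rw [key]
  refine Set.add_mem_add (Set.add_mem_add (Set.add_mem_add (Set.add_mem_add rfl rfl) (hw t)) (hv (t+1))) ?_
  exact Set.neg_mem_neg.mpr (hav t)
end

section
/- Under the dynamics x(t+1) = A x(t) + B u(t) + w(t), y(t) = x(t) + v(t), with w(t) ∈ Z_w, v(t) ∈ Z_v, A v(t) ∈ Z_{Av}, the true output trajectory satisfies y(t) ∈ R̂_t for all t, where R̂_t is the data-driven reachable set defined by R̂_0 = {y(0)} and R̂_{t+1} = M_Σ·(R̂_t × {u(t)}) ⊕ Z_w ⊕ Z_v ⊕ (−Z_{Av}), provided [A B] ∈ M_Σ. -/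
open Matrix BigOperators Pointwise

def matSetProd {n m : ℕ} (M : Set (Matrix (Fin n) (Fin n ⊕ Fin m) ℝ))
    (S : Set (Fin n → ℝ)) (U : Set (Fin m → ℝ)) : Set (Fin n → ℝ) :=
  {y | ∃ X ∈ M, ∃ s ∈ S, ∃ u ∈ U, y = X.mulVec (Sum.elim s u)}

/-! Since `y = x + v`, one step of the state equation, written in the outputs, reads
`y(t+1) = [A B] (y(t), u(t)) + w(t) + v(t+1) - A v(t)`. As `[A B] ∈ M_Σ`, `y(t) ∈ R̂_t`,
`w(t) ∈ Z_w`, `v(t+1) ∈ Z_v` and `A v(t) ∈ Z_{Av}`, each summand lies in the corresponding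
summand of `R̂_{t+1}`; induction on `t` concludes. -/

lemma mulVec_sumElim_mem_matSetProd {n m : ℕ} {M : Set (Matrix (Fin n) (Fin n ⊕ Fin m) ℝ)}
    {S : Set (Fin n → ℝ)} {U : Set (Fin m → ℝ)} {X : Matrix (Fin n) (Fin n ⊕ Fin m) ℝ}
    {s : Fin n → ℝ} {u : Fin m → ℝ} (hX : X ∈ M) (hs : s ∈ S) (hu : u ∈ U) :
    X *ᵥ Sum.elim s u ∈ matSetProd M S U :=
  ⟨X, hX, s, hs, u, hu, rfl⟩

lemma output_step_eq {R ι κ : Type*} [Ring R] [Fintype ι] [Fintype κ]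
    (A : Matrix ι ι R) (B : Matrix ι κ R) {x x' y y' v v' w : ι → R} {u : κ → R}
    (hx' : x' = A *ᵥ x + B *ᵥ u + w) (hy : y = x + v) (hy' : y' = x' + v') :
    y' = fromCols A B *ᵥ Sum.elim y u + w + v' + -(A *ᵥ v) := by
  rw [fromCols_mulVec_sumElim, hy', hx', hy, mulVec_add]
  abel

lemma output_step_mem {n m : ℕ} (A : Matrix (Fin n) (Fin n) ℝ) (B : Matrix (Fin n) (Fin m) ℝ)
    {M : Set (Matrix (Fin n) (Fin n ⊕ Fin m) ℝ)} (hAB : fromCols A B ∈ M)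
    {S Zw Zv Za : Set (Fin n → ℝ)} {x x' y y' v v' w : Fin n → ℝ} {u : Fin m → ℝ}
    (hx' : x' = A *ᵥ x + B *ᵥ u + w) (hy : y = x + v) (hy' : y' = x' + v')
    (hyS : y ∈ S) (hw : w ∈ Zw) (hv' : v' ∈ Zv) (hav : A *ᵥ v ∈ Za) :
    y' ∈ matSetProd M S {u} + Zw + Zv + -Za := by
  rw [output_step_eq A B hx' hy hy']
  exact Set.add_mem_add (Set.add_mem_add (Set.add_mem_add
    (mulVec_sumElim_mem_matSetProd hAB hyS rfl) hw) hv') (Set.neg_mem_neg.mpr hav)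

/-- The true output trajectory is contained in the data-driven reachable sets:
`y(t) ∈ R̂_t` for all `t`. -/
theorem output_in_data_reach {n m γw γv γa : ℕ}
    (A : Matrix (Fin n) (Fin n) ℝ) (B : Matrix (Fin n) (Fin m) ℝ)
    (Msig : Set (Matrix (Fin n) (Fin n ⊕ Fin m) ℝ))
    (hAB : Matrix.fromCols A B ∈ Msig)
    (x y : ℕ → Fin n → ℝ) (u : ℕ → Fin m → ℝ) (w v : ℕ → Fin n → ℝ)
    (cw : Fin n → ℝ) (gw : Fin γw → Fin n → ℝ)
    (cv : Fin n → ℝ) (gv : Fin γv → Fin n → ℝ)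
    (ca : Fin n → ℝ) (ga : Fin γa → Fin n → ℝ)
    (hdyn : ∀ t, x (t + 1) = A.mulVec (x t) + B.mulVec (u t) + w t)
    (hout : ∀ t, y t = x t + v t)
    (hw : ∀ t, w t ∈ zono cw gw)
    (hv : ∀ t, v t ∈ zono cv gv)
    (hav : ∀ t, A.mulVec (v t) ∈ zono ca ga)
    (Rhat : ℕ → Set (Fin n → ℝ))
    (hRhat0 : Rhat 0 = {y 0})
    (hRhat : ∀ t, Rhat (t + 1) =
      matSetProd Msig (Rhat t) {u t} + zono cw gw + zono cv gv + -(zono ca ga)) :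
    ∀ t, y t ∈ Rhat t := by
  intro t
  induction t with
  | zero => exact hRhat0 ▸ rfl
  | succ t ih =>
    rw [hRhat t]
    exact output_step_mem A B hAB (hdyn t) (hout t) (hout (t + 1)) ih (hw t) (hv (t + 1)) (hav t)
end

section
/- For the controllable noise-free system y(t+1) = A y(t) + B u(t) with y ∈ R^n, u ∈ R^m, if the input sequence applied during data collection is persistently exciting of order n+1 (i.e., the Hankel matrix H_{0,n+1,T−n}(u) has full row rank m(n+1)), then the stacked data matrix [Y₋; U₋] ∈ R^{(n+m)×T} has rank n+m, and hence admits a right inverse. -/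
open Matrix

/-- If a matrix has full row rank, its left kernel is trivial. -/
lemma willems_aux_left_kernel {p q : Type*} [Fintype p] [Fintype q] [DecidableEq p]
    (N : Matrix p q ℝ) (h : N.rank = Fintype.card p) :
    ∀ v : p → ℝ, v ᵥ* N = 0 → v = 0 := by
  intro v hv
  have h1 : Nᵀ.rank = Fintype.card p := by rw [N.rank_transpose]; exact h
  have h2 := LinearMap.finrank_range_add_finrank_ker (Nᵀ.mulVecLin)
  rw [Module.finrank_fintype_fun_eq_card] at h2
  have h3 : Module.finrank ℝ (LinearMap.ker Nᵀ.mulVecLin) = 0 := by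
    have : Nᵀ.rank = Module.finrank ℝ (LinearMap.range Nᵀ.mulVecLin) := rfl
    omega
  have h4 : LinearMap.ker Nᵀ.mulVecLin = ⊥ := Submodule.finrank_eq_zero.mp h3
  have h5 : v ∈ LinearMap.ker Nᵀ.mulVecLin := by
    simp only [LinearMap.mem_ker, mulVecLin_apply, mulVec_transpose]
    exact hv
  rw [h4, Submodule.mem_bot] at h5
  exact h5

/-- Solution formula of the LTI system. -/
lemma willems_aux_sol {n m : ℕ} (A : Matrix (Fin n) (Fin n) ℝ) (B : Matrix (Fin n) (Fin m) ℝ)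
    (y : ℕ → Fin n → ℝ) (u : ℕ → Fin m → ℝ)
    (hdyn : ∀ t, y (t + 1) = A.mulVec (y t) + B.mulVec (u t)) (j : ℕ) :
    ∀ r, y (j + r) = (A ^ r) *ᵥ y j +
      ∑ s ∈ Finset.range r, ((A ^ (r - 1 - s)) * B) *ᵥ u (j + s) := by
  intro r
  induction r with
  | zero => simp
  | succ r ih =>
    have : j + (r + 1) = (j + r) + 1 := by omega
    rw [this, hdyn, ih]
    rw [Finset.sum_range_succ]
    have e1 : A *ᵥ ((A ^ r) *ᵥ y j + ∑ s ∈ Finset.range r, ((A ^ (r - 1 - s)) * B) *ᵥ u (j + s))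
        = (A ^ (r+1)) *ᵥ y j + ∑ s ∈ Finset.range r, ((A ^ (r - s)) * B) *ᵥ u (j + s) := by
      rw [mulVec_add]
      congr 1
      · rw [mulVec_mulVec, ← pow_succ']
      · have hmap : A *ᵥ (∑ s ∈ Finset.range r, ((A ^ (r - 1 - s)) * B) *ᵥ u (j + s))
            = ∑ s ∈ Finset.range r, A *ᵥ (((A ^ (r - 1 - s)) * B) *ᵥ u (j + s)) := by
          simpa only [mulVecLin_apply] using
            map_sum A.mulVecLin (fun s => ((A ^ (r - 1 - s)) * B) *ᵥ u (j + s)) (Finset.range r)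
        rw [hmap]
        apply Finset.sum_congr rfl
        intro s hs
        rw [Finset.mem_range] at hs
        rw [mulVec_mulVec, ← Matrix.mul_assoc, ← pow_succ']
        have : r - 1 - s + 1 = r - s := by omega
        rw [this]
    rw [e1]
    have e2 : ∀ s ∈ Finset.range r, ((A ^ (r + 1 - 1 - s)) * B) *ᵥ u (j + s)
        = ((A ^ (r - s)) * B) *ᵥ u (j + s) := by
      intro s hs
      have : r + 1 - 1 - s = r - s := by omega
      rw [this]
    rw [Finset.sum_congr rfl e2]
    have : r + 1 - 1 - r = 0 := by omega
    rw [this, pow_zero, Matrix.one_mul]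
    abel

lemma willems_aux_sum_dotProduct {ι κ : Type*} [Fintype κ] (s : Finset ι) (f : ι → κ → ℝ)
    (w : κ → ℝ) : (∑ i ∈ s, f i) ⬝ᵥ w = ∑ i ∈ s, f i ⬝ᵥ w := by
  simp only [dotProduct, Finset.sum_apply, Finset.sum_mul]
  exact Finset.sum_comm

lemma willems_aux_dotProduct_sum {ι κ : Type*} [Fintype κ] (s : Finset ι) (v : κ → ℝ)
    (f : ι → κ → ℝ) : v ⬝ᵥ (∑ i ∈ s, f i) = ∑ i ∈ s, v ⬝ᵥ f i := by
  simp only [dotProduct, Finset.sum_apply, Finset.mul_sum]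
  exact Finset.sum_comm

lemma willems_aux_vecMul_sum {ι p q : Type*} [Fintype p] (v : p → ℝ) (s : Finset ι)
    (f : ι → Matrix p q ℝ) : v ᵥ* (∑ i ∈ s, f i) = ∑ i ∈ s, v ᵥ* f i := by
  ext j
  rw [Finset.sum_apply]
  simp only [vecMul, dotProduct, Matrix.sum_apply, Finset.mul_sum]
  exact Finset.sum_comm

lemma willems_aux_vecMul_smul {p q : Type*} [Fintype p] (a : ℝ) (v : p → ℝ)
    (N : Matrix p q ℝ) : v ᵥ* (a • N) = a • (v ᵥ* N) := by
  ext j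
  simp only [vecMul, dotProduct, Pi.smul_apply, smul_eq_mul, Matrix.smul_apply, Finset.mul_sum]
  exact Finset.sum_congr rfl fun i _ => by ring


lemma willems_key {n m T : ℕ}
    (A : Matrix (Fin n) (Fin n) ℝ) (B : Matrix (Fin n) (Fin m) ℝ)
    (hctrb : (Matrix.of fun (i : Fin n) (p : Fin n × Fin m) =>
        ((A ^ (p.1 : ℕ)) * B) i p.2).rank = n)
    (y : ℕ → Fin n → ℝ) (u : ℕ → Fin m → ℝ)
    (hdyn : ∀ t, y (t + 1) = A.mulVec (y t) + B.mulVec (u t))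
    (hPE : (Matrix.of fun (p : Fin (n + 1) × Fin m) (j : Fin (T - n)) =>
        u ((j : ℕ) + (p.1 : ℕ)) p.2).rank = m * (n + 1))
    (v : Fin n ⊕ Fin m → ℝ)
    (hv : v ᵥ* (Matrix.fromRows
        (Matrix.of fun (i : Fin n) (j : Fin T) => y j i)
        (Matrix.of fun (i : Fin m) (j : Fin T) => u j i)) = 0) : v = 0 := by
  classical
  set η : Fin n → ℝ := fun i => v (Sum.inl i) with hηdef
  set ζ : Fin m → ℝ := fun i => v (Sum.inr i) with hζdef
  set a : ℕ → ℝ := fun r => A.charpoly.coeff r with hadef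
  -- each column gives a linear relation
  have hrow : ∀ t, t < T → η ⬝ᵥ y t + ζ ⬝ᵥ u t = 0 := by
    intro t ht
    have h0 := congrFun hv ⟨t, ht⟩
    simpa [vecMul, dotProduct, Fintype.sum_sum_type, η, ζ] using h0
  -- Cayley--Hamilton
  have hCH : ∑ r ∈ Finset.range (n + 1), a r • (A ^ r) = 0 := by
    have hdeg : A.charpoly.natDegree < n + 1 := by
      rw [Matrix.charpoly_natDegree_eq_dim, Fintype.card_fin]; omega
    have h1 := Polynomial.aeval_eq_sum_range' hdeg A
    rw [Matrix.aeval_self_charpoly] at h1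
    exact h1.symm
  set c : ℕ → Fin m → ℝ :=
    fun s => a s • ζ + ∑ d ∈ Finset.range (n - s), a (s + 1 + d) • (η ᵥ* ((A ^ d) * B))
    with hcdef
  -- the key identity from the dynamics
  have hkey : ∀ j, j + n < T → ∑ s ∈ Finset.range (n + 1), (c s) ⬝ᵥ u (j + s) = 0 := by
    intro j hj
    have h0 : ∑ r ∈ Finset.range (n + 1), a r * (η ⬝ᵥ y (j + r) + ζ ⬝ᵥ u (j + r)) = 0 := by
      apply Finset.sum_eq_zero
      intro r hr
      rw [Finset.mem_range] at hr
      rw [hrow (j + r) (by omega)]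
      ring
    have h1 : ∀ r, η ⬝ᵥ y (j + r) = (η ᵥ* (A ^ r)) ⬝ᵥ y j
        + ∑ s ∈ Finset.range r, (η ᵥ* ((A ^ (r - 1 - s)) * B)) ⬝ᵥ u (j + s) := by
      intro r
      rw [willems_aux_sol A B y u hdyn j r, dotProduct_add,
        willems_aux_dotProduct_sum, dotProduct_mulVec]
      congr 1
      exact Finset.sum_congr rfl fun s _ => by rw [dotProduct_mulVec]
    -- expand
    have hexpand : ∑ r ∈ Finset.range (n + 1), a r * (η ⬝ᵥ y (j + r) + ζ ⬝ᵥ u (j + r))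
        = (∑ r ∈ Finset.range (n + 1), a r * ((η ᵥ* (A ^ r)) ⬝ᵥ y j))
          + ((∑ r ∈ Finset.range (n + 1), ∑ s ∈ Finset.range r,
              a r * ((η ᵥ* ((A ^ (r - 1 - s)) * B)) ⬝ᵥ u (j + s)))
            + ∑ r ∈ Finset.range (n + 1), a r * (ζ ⬝ᵥ u (j + r))) := by
      rw [← Finset.sum_add_distrib, ← Finset.sum_add_distrib]
      apply Finset.sum_congr rfl
      intro r _
      rw [h1 r, mul_add, mul_add, Finset.mul_sum]
      ring
    have h2 : ∑ r ∈ Finset.range (n + 1), a r * ((η ᵥ* (A ^ r)) ⬝ᵥ y j) = 0 := by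
      have he : ∑ r ∈ Finset.range (n + 1), a r * ((η ᵥ* (A ^ r)) ⬝ᵥ y j)
          = (η ᵥ* (∑ r ∈ Finset.range (n + 1), a r • (A ^ r))) ⬝ᵥ y j := by
        rw [willems_aux_vecMul_sum, willems_aux_sum_dotProduct]
        apply Finset.sum_congr rfl
        intro r _
        rw [willems_aux_vecMul_smul, smul_dotProduct, smul_eq_mul]
      rw [he, hCH]
      simp
    -- swap the double sum and reindex
    have h3 : ∑ r ∈ Finset.range (n + 1), ∑ s ∈ Finset.range r,
          a r * ((η ᵥ* ((A ^ (r - 1 - s)) * B)) ⬝ᵥ u (j + s))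
        = ∑ s ∈ Finset.range (n + 1),
            (∑ d ∈ Finset.range (n - s), a (s + 1 + d) • (η ᵥ* ((A ^ d) * B))) ⬝ᵥ u (j + s) := by
      have hswap := Finset.sum_Ico_Ico_comm' 0 (n + 1)
        (fun s r => a r * ((η ᵥ* ((A ^ (r - 1 - s)) * B)) ⬝ᵥ u (j + s)))
      simp only [← Finset.range_eq_Ico] at hswap
      rw [← hswap]
      apply Finset.sum_congr rfl
      intro s hs
      rw [Finset.mem_range] at hs
      rw [Finset.sum_Ico_eq_sum_range]
      have hn : n + 1 - (s + 1) = n - s := by omega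
      rw [hn, willems_aux_sum_dotProduct]
      apply Finset.sum_congr rfl
      intro d _
      rw [smul_dotProduct, smul_eq_mul]
      have : s + 1 + d - 1 - s = d := by omega
      rw [this]
    -- conclude
    have h4 : ∑ s ∈ Finset.range (n + 1), (c s) ⬝ᵥ u (j + s)
        = (∑ r ∈ Finset.range (n + 1), ∑ s ∈ Finset.range r,
            a r * ((η ᵥ* ((A ^ (r - 1 - s)) * B)) ⬝ᵥ u (j + s)))
          + ∑ r ∈ Finset.range (n + 1), a r * (ζ ⬝ᵥ u (j + r)) := by
      rw [h3, ← Finset.sum_add_distrib]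
      apply Finset.sum_congr rfl
      intro s _
      rw [hcdef]
      simp only [add_dotProduct, smul_dotProduct, smul_eq_mul]
      ring
    rw [h4]
    have := hexpand.symm.trans h0
    rw [h2, zero_add] at this
    exact this
  -- the Hankel matrix kills the coefficient vector
  have hHrank : (Matrix.of fun (p : Fin (n + 1) × Fin m) (j : Fin (T - n)) =>
      u ((j : ℕ) + (p.1 : ℕ)) p.2).rank = Fintype.card (Fin (n + 1) × Fin m) := by
    rw [hPE, Fintype.card_prod, Fintype.card_fin, Fintype.card_fin, mul_comm]
  have hξ : (fun p : Fin (n + 1) × Fin m => c (p.1 : ℕ) p.2) ᵥ*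
      (Matrix.of fun (p : Fin (n + 1) × Fin m) (j : Fin (T - n)) =>
        u ((j : ℕ) + (p.1 : ℕ)) p.2) = 0 := by
    funext jj
    have hlt : (jj : ℕ) + n < T := by have := jj.isLt; omega
    have : (∑ s ∈ Finset.range (n + 1), (c s) ⬝ᵥ u ((jj : ℕ) + s)) = 0 := hkey jj hlt
    rw [← Fin.sum_univ_eq_sum_range (fun s => (c s) ⬝ᵥ u ((jj : ℕ) + s)) (n + 1)] at this
    simp only [vecMul, dotProduct, Fintype.sum_prod_type, Matrix.of_apply, Pi.zero_apply]
    simpa [dotProduct] using this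
  have hc0 : ∀ s ≤ n, ∀ i, c s i = 0 := by
    have h5 := willems_aux_left_kernel _ hHrank _ hξ
    intro s hs i
    have := congrFun h5 (⟨s, by omega⟩, i)
    simpa using this
  -- extract ζ = 0
  have han : a n = 1 := by
    have h6 := A.charpoly_monic.coeff_natDegree
    rw [Matrix.charpoly_natDegree_eq_dim, Fintype.card_fin] at h6
    exact h6
  have hζ0 : ∀ i, ζ i = 0 := by
    intro i
    have h7 := hc0 n le_rfl i
    rw [hcdef] at h7
    simp only [Nat.sub_self, Finset.range_zero, Finset.sum_empty, add_zero, Pi.smul_apply,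
      smul_eq_mul, han, one_mul] at h7
    exact h7
  -- extract η ⊥ A^k B by strong induction
  have hηA : ∀ k, k < n → ∀ i, (η ᵥ* ((A ^ k) * B)) i = 0 := by
    intro k
    induction k using Nat.strong_induction_on with
    | _ k IH =>
      intro hk i
      have h8 := hc0 (n - 1 - k) (by omega) i
      rw [hcdef] at h8
      have hr : n - (n - 1 - k) = k + 1 := by omega
      simp only [Pi.add_apply, Pi.smul_apply, smul_eq_mul, hζ0 i, mul_zero, zero_add, hr,
        Finset.sum_apply] at h8
      rw [Finset.sum_range_succ] at h8
      have hidx : n - 1 - k + 1 + k = n := by omega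
      rw [hidx, han, one_mul] at h8
      have hz : ∑ d ∈ Finset.range k, a (n - 1 - k + 1 + d) * (η ᵥ* ((A ^ d) * B)) i = 0 := by
        apply Finset.sum_eq_zero
        intro d hd
        rw [Finset.mem_range] at hd
        rw [IH d hd (by omega) i, mul_zero]
      rw [hz, zero_add] at h8
      exact h8
  -- controllability kills η
  have hη0 : η = 0 := by
    apply willems_aux_left_kernel _ (by rw [hctrb, Fintype.card_fin])
    funext p
    have : (η ᵥ* (Matrix.of fun (i : Fin n) (p : Fin n × Fin m) =>
        ((A ^ (p.1 : ℕ)) * B) i p.2)) p = (η ᵥ* ((A ^ (p.1 : ℕ)) * B)) p.2 := by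
      simp [vecMul, dotProduct]
    rw [Pi.zero_apply, this]
    exact hηA p.1 p.1.isLt p.2
  funext i
  cases i with
  | inl i => exact congrFun hη0 i
  | inr i => exact hζ0 i

/-- Willems' fundamental lemma (case `k = 1`): for a controllable noise-free system
`y(t+1) = A y(t) + B u(t)`, if the input is persistently exciting of order `n + 1`
(the Hankel matrix of depth `n + 1` has full row rank `m(n+1)`), then the stacked data
matrix `[Y₋; U₋]` has full row rank `n + m`, and hence admits a right inverse. -/
theorem stacked_data_full_rank_of_persistently_exciting {n m T : ℕ}
    (A : Matrix (Fin n) (Fin n) ℝ) (B : Matrix (Fin n) (Fin m) ℝ)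
    -- controllability: the controllability matrix [B, AB, ..., A^{n-1}B] has rank n
    (hctrb : (Matrix.of fun (i : Fin n) (p : Fin n × Fin m) =>
        ((A ^ (p.1 : ℕ)) * B) i p.2).rank = n)
    (y : ℕ → Fin n → ℝ) (u : ℕ → Fin m → ℝ)
    (hdyn : ∀ t, y (t + 1) = A.mulVec (y t) + B.mulVec (u t))
    (hT : (m + 1) * (n + 1) - 1 ≤ T)
    -- persistency of excitation of order n+1: the Hankel matrix H_{0,n+1,T-n}(u)
    -- has full row rank m(n+1)
    (hPE : (Matrix.of fun (p : Fin (n + 1) × Fin m) (j : Fin (T - n)) =>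
        u ((j : ℕ) + (p.1 : ℕ)) p.2).rank = m * (n + 1)) :
    (Matrix.fromRows
        (Matrix.of fun (i : Fin n) (j : Fin T) => y j i)
        (Matrix.of fun (i : Fin m) (j : Fin T) => u j i)).rank = n + m ∧
      ∃ P : Matrix (Fin T) (Fin n ⊕ Fin m) ℝ,
        Matrix.fromRows
            (Matrix.of fun (i : Fin n) (j : Fin T) => y j i)
            (Matrix.of fun (i : Fin m) (j : Fin T) => u j i) * P = 1 := by
  classical
  set M : Matrix (Fin n ⊕ Fin m) (Fin T) ℝ := Matrix.fromRows
      (Matrix.of fun (i : Fin n) (j : Fin T) => y j i)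
      (Matrix.of fun (i : Fin m) (j : Fin T) => u j i) with hMdef
  have key : ∀ v : Fin n ⊕ Fin m → ℝ, v ᵥ* M = 0 → v = 0 :=
    fun v hv => willems_key A B hctrb y u hdyn hPE v hv
  have hG : IsUnit (M * Mᵀ) := by
    rw [← Matrix.vecMul_injective_iff_isUnit]
    intro p q hpq
    have hsub : (p - q) ᵥ* (M * Mᵀ) = 0 := by
      simp only at hpq
      rw [Matrix.sub_vecMul, hpq, sub_self]
    have hzero : (p - q) ᵥ* M = 0 := by
      have h7 : ((p - q) ᵥ* M) ⬝ᵥ ((p - q) ᵥ* M) = 0 := by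
        calc ((p - q) ᵥ* M) ⬝ᵥ ((p - q) ᵥ* M)
            = ((p - q) ᵥ* M) ⬝ᵥ (Mᵀ *ᵥ (p - q)) := by rw [Matrix.mulVec_transpose]
          _ = (((p - q) ᵥ* M) ᵥ* Mᵀ) ⬝ᵥ (p - q) := Matrix.dotProduct_mulVec _ _ _
          _ = ((p - q) ᵥ* (M * Mᵀ)) ⬝ᵥ (p - q) := by rw [Matrix.vecMul_vecMul]
          _ = 0 := by rw [hsub, zero_dotProduct]
      exact dotProduct_self_eq_zero.mp h7
    have := key _ hzero
    rwa [sub_eq_zero] at this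
  have hrank : M.rank = n + m := by
    rw [← Matrix.rank_self_mul_transpose, Matrix.rank_of_isUnit _ hG,
      Fintype.card_sum, Fintype.card_fin, Fintype.card_fin]
  refine ⟨hrank, Mᵀ * (M * Mᵀ)⁻¹, ?_⟩
  rw [← Matrix.mul_assoc, Matrix.mul_nonsing_inv]
  exact (Matrix.isUnit_iff_isUnit_det _).mp hG
end
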